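/- Sewing lemma with explicit modulus: let Ξ : {(s,t) : 0 ≤ s ≤ t ≤ 1} → E be a map into a Banach space E and set δΞ_{s,t,u} = Ξ_{s,u} − Ξ_{s,t} − Ξ_{t,u}. Suppose there are constants C ≥ 0 and θ > 1 with |δΞ_{s,t,u}| ≤ C·|u−s|^{θ} for all s ≤ t ≤ u. Then there exists a unique (up to additive constant) path I : [0,1] → E such that |I_t − I_s − Ξ_{s,t}| ≤ K·C·|t−s|^{θ} for all s ≤ t, where K depends only on θ, and I_t − I_s is the limit of Riemann sums Σ_{[u,v] ∈ D} Ξ_{u,v} along partitions D of [s,t] with mesh tending to 0. -/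

import Mathlib

/-!
Removing from a partition of `[s, t]` into `n + 1` intervals an interior point whose two
neighbours are closest changes the Riemann sum of `Ξ` by a single `δΞ`, of norm at most
`C (2 (t - s) / n) ^ θ`. Removing the points one at a time shows that every Riemann sum is within
`2 ^ θ ζ(θ) C (t - s) ^ θ` of `Ξ s t`.

The path `I t` is the limit of the Riemann sums over the dyadic grid of `[0, t]`: passing from
level `n` to level `n + 1` inserts one point in each interval, which costs at most
`C 2 ^ (n (1 - θ))`. At a fixed level the sums over `[0, t]` and over `[0, s]` and `[s, t]` differ
only by the `δΞ` of the grid interval containing `s`, so the bound on Riemann sums passes to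
`I t - I s - Ξ s t`. Finally, a function with increments `O(|t - s| ^ θ)`, `θ > 1`, is constant, and
summing the same bound over a fine partition gives the convergence of Riemann sums.
-/

open Finset Filter Topology

structure IsPartition (u : ℕ → ℝ) (n : ℕ) (s t : ℝ) : Prop where
  zero : u 0 = s
  last : u n = t
  mono : ∀ i < n, u i ≤ u (i + 1)

namespace IsPartition

variable {u : ℕ → ℝ} {n : ℕ} {s t : ℝ}

theorem apply_le_apply (hu : IsPartition u n s t) {i j : ℕ} (hij : i ≤ j) (hj : j ≤ n) :
    u i ≤ u j := by
  induction j, hij using Nat.le_induction with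
  | base => rfl
  | succ j hij ih => exact (ih (by omega)).trans (hu.mono j (by omega))

theorem mem_Icc (hu : IsPartition u n s t) {i : ℕ} (hi : i ≤ n) : u i ∈ Set.Icc s t :=
  ⟨hu.zero ▸ hu.apply_le_apply (Nat.zero_le i) hi, hu.last ▸ hu.apply_le_apply hi le_rfl⟩

theorem le (hu : IsPartition u n s t) : s ≤ t :=
  Set.nonempty_Icc.mp ⟨_, hu.mem_Icc (Nat.zero_le n)⟩

theorem sum_map_sub {F : Type*} [AddCommGroup F] (hu : IsPartition u n s t) (f : ℝ → F) :
    ∑ i ∈ range n, (f (u (i + 1)) - f (u i)) = f t - f s := by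
  rw [sum_range_sub (fun i => f (u i)), hu.last, hu.zero]

theorem exists_sub_le (hu : IsPartition u (n + 2) s t) :
    ∃ m ≤ n, u (m + 2) - u m ≤ 2 * (t - s) / (n + 1) := by
  have hsum : ∑ m ∈ range (n + 1), (u (m + 2) - u m) ≤
      ∑ _m ∈ range (n + 1), 2 * (t - s) / (n + 1) := by
    have h1 := sum_range_sub (fun i => u (i + 1)) (n + 1)
    have h2 := sum_range_sub u (n + 1)
    have hu1 := (hu.mem_Icc (i := 1) (by omega)).1
    have hun := (hu.mem_Icc (i := n + 1) (by omega)).2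
    rw [sum_const, card_range, nsmul_eq_mul, Nat.cast_add_one, mul_div_cancel₀ _ (by positivity)]
    simp only [show ∀ m, u (m + 2) - u m = (u (m + 1 + 1) - u (m + 1)) + (u (m + 1) - u m) from
      fun m => by ring, sum_add_distrib, h1, h2, hu.last, hu.zero]
    linarith
  obtain ⟨m, hm, h⟩ := exists_le_of_sum_le nonempty_range_add_one hsum
  exact ⟨m, Nat.lt_succ_iff.mp (mem_range.mp hm), h⟩

theorem eraseIdx {m r : ℕ} (hu : IsPartition u (m + 2 + r) s t) :
    IsPartition (fun j => if j ≤ m then u j else u (j + 1)) (m + 1 + r) s t where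
  zero := by simpa using hu.zero
  last := by
    rw [if_neg (by omega), show m + 1 + r + 1 = m + 2 + r by omega, hu.last]
  mono i hi := by
    rcases lt_trichotomy i m with h | rfl | h
    · rw [if_pos h.le, if_pos (show i + 1 ≤ m by omega)]; exact hu.mono i (by omega)
    · rw [if_pos le_rfl, if_neg (by omega)]; exact hu.apply_le_apply (by omega) (by omega)
    · rw [if_neg (by omega), if_neg (by omega)]; exact hu.mono (i + 1) (by omega)

theorem norm_sum_le_of_le_rpow {E : Type*} [SeminormedAddCommGroup E] {θ M δ : ℝ} {g : ℕ → E}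
    (hu : IsPartition u n s t) (hθ : 1 ≤ θ) (hM : 0 ≤ M) (hmesh : ∀ i < n, u (i + 1) - u i ≤ δ)
    (hg : ∀ i < n, ‖g i‖ ≤ M * (u (i + 1) - u i) ^ θ) :
    ‖∑ i ∈ range n, g i‖ ≤ M * δ ^ (θ - 1) * (t - s) := by
  have hterm : ∀ i ∈ range n, ‖g i‖ ≤ M * δ ^ (θ - 1) * (u (i + 1) - u i) := by
    intro i hi
    have hi := mem_range.mp hi
    have hΔ : 0 ≤ u (i + 1) - u i := sub_nonneg.mpr (hu.mono i hi)
    calc ‖g i‖ ≤ M * (u (i + 1) - u i) ^ θ := hg i hi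
      _ = M * ((u (i + 1) - u i) ^ (θ - 1) * (u (i + 1) - u i)) := by
          rw [← Real.rpow_add_one' hΔ (by linarith), sub_add_cancel]
      _ ≤ M * (δ ^ (θ - 1) * (u (i + 1) - u i)) := by
          gcongr
          exact hmesh i hi
      _ = _ := by ring
  calc ‖∑ i ∈ range n, g i‖ ≤ ∑ i ∈ range n, M * δ ^ (θ - 1) * (u (i + 1) - u i) :=
        (_root_.norm_sum_le _ _).trans (sum_le_sum hterm)
    _ = M * δ ^ (θ - 1) * (t - s) := by rw [← mul_sum, hu.sum_map_sub (fun x => x)]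

end IsPartition

theorem Finset.sum_range_two_mul {M : Type*} [AddCommMonoid M] (f : ℕ → M) (m : ℕ) :
    ∑ j ∈ range (2 * m), f j = ∑ k ∈ range m, (f (2 * k) + f (2 * k + 1)) := by
  induction m with
  | zero => simp
  | succ m ih => rw [mul_add_one, sum_range_succ, sum_range_succ, sum_range_succ, ih, add_assoc]

theorem inv_two_pow_rpow (n : ℕ) (y : ℝ) : ((2 : ℝ) ^ n)⁻¹ ^ y = ((2 : ℝ) ^ y)⁻¹ ^ n := by
  rw [Real.inv_rpow (by positivity), ← Real.rpow_pow_comm zero_le_two, inv_pow]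

theorem inv_two_rpow_lt_one {y : ℝ} (hy : 0 < y) : ((2 : ℝ) ^ y)⁻¹ < 1 :=
  inv_lt_one_of_one_lt₀ (Real.one_lt_rpow one_lt_two hy)

theorem tendsto_inv_two_pow_rpow {y : ℝ} (hy : 0 < y) :
    Tendsto (fun n : ℕ => ((2 : ℝ) ^ n)⁻¹ ^ y) atTop (𝓝 0) := by
  simpa only [inv_two_pow_rpow] using
    tendsto_pow_atTop_nhds_zero_of_lt_one (by positivity) (inv_two_rpow_lt_one hy)

-- The grid points outside `[s, t]` collapse onto `s` or `t`, where `Ξ` vanishes on the diagonal.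
noncomputable def dyadicPartition (n : ℕ) (s t : ℝ) (k : ℕ) : ℝ := max s (min (k / 2 ^ n) t)

theorem isPartition_dyadicPartition (n : ℕ) {s t : ℝ} (hs : 0 ≤ s) (hst : s ≤ t) (ht : t ≤ 1) :
    IsPartition (dyadicPartition n s t) (2 ^ n) s t where
  zero := by simp [dyadicPartition, hs]
  last := by simp [dyadicPartition, ht, hst]
  mono k _ := by unfold dyadicPartition; gcongr; simp

theorem dyadicPartition_succ_sub_le (n : ℕ) (s t : ℝ) (k : ℕ) :
    dyadicPartition n s t (k + 1) - dyadicPartition n s t k ≤ ((2 : ℝ) ^ n)⁻¹ := by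
  have hk : ((k + 1 : ℕ) : ℝ) / 2 ^ n = k / 2 ^ n + ((2 : ℝ) ^ n)⁻¹ := by push_cast; ring
  unfold dyadicPartition
  have hδ : 0 ≤ ((2 : ℝ) ^ n)⁻¹ := by positivity
  rw [hk]
  simp only [max_def, min_def]
  split_ifs <;> linarith

theorem dyadicPartition_two_mul (n : ℕ) (s t : ℝ) (k : ℕ) :
    dyadicPartition (n + 1) s t (2 * k) = dyadicPartition n s t k := by
  simp only [dyadicPartition, pow_succ, Nat.cast_mul, Nat.cast_ofNat]
  congr 2
  field_simp

theorem summable_inv_add_one_rpow {θ : ℝ} (hθ : 1 < θ) :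
    Summable fun k : ℕ => (((k : ℝ) + 1) ^ θ)⁻¹ := by
  exact_mod_cast (summable_nat_add_iff 1).mpr (Real.summable_nat_rpow_inv.mpr hθ)

noncomputable def sewingConst (θ : ℝ) : ℝ := 2 ^ θ * ∑' k : ℕ, (((k : ℝ) + 1) ^ θ)⁻¹

theorem sewingConst_pos {θ : ℝ} (hθ : 1 < θ) : 0 < sewingConst θ :=
  mul_pos (by positivity) ((summable_inv_add_one_rpow hθ).tsum_pos (fun _ => by positivity) 0
    (by positivity))

section Sewing

variable {E : Type*} [NormedAddCommGroup E]

def SewingBound (Ξ : ℝ → ℝ → E) (C θ : ℝ) : Prop :=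
  ∀ s t u : ℝ, 0 ≤ s → s ≤ t → t ≤ u → u ≤ 1 → ‖Ξ s u - Ξ s t - Ξ t u‖ ≤ C * (u - s) ^ θ

def riemannSum (Ξ : ℝ → ℝ → E) (u : ℕ → ℝ) (n : ℕ) : E :=
  ∑ i ∈ range n, Ξ (u i) (u (i + 1))

theorem riemannSum_eraseIdx (Ξ : ℝ → ℝ → E) (u : ℕ → ℝ) (m r : ℕ) :
    riemannSum Ξ u (m + 2 + r) =
      riemannSum Ξ (fun j => if j ≤ m then u j else u (j + 1)) (m + 1 + r)
        + (Ξ (u m) (u (m + 1)) + Ξ (u (m + 1)) (u (m + 2)) - Ξ (u m) (u (m + 2))) := by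
  set v : ℕ → ℝ := fun j => if j ≤ m then u j else u (j + 1)
  have hle : ∀ j ≤ m, v j = u j := fun j hj => if_pos hj
  have hgt : ∀ j, m < j → v j = u (j + 1) := fun j hj => if_neg (by omega)
  have hhead : ∑ j ∈ range m, Ξ (v j) (v (j + 1)) = ∑ j ∈ range m, Ξ (u j) (u (j + 1)) :=
    sum_congr rfl fun j hj => by
      rw [hle j (by simp at hj; omega), hle (j + 1) (by simp at hj; omega)]
  have htail : ∑ j ∈ range r, Ξ (v (m + 1 + j)) (v (m + 1 + j + 1)) =
      ∑ j ∈ range r, Ξ (u (m + 2 + j)) (u (m + 2 + j + 1)) :=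
    sum_congr rfl fun j _ => by
      rw [hgt _ (by omega), hgt _ (by omega), show m + 1 + j + 1 = m + 2 + j by omega]
  simp only [riemannSum, sum_range_add, sum_range_succ, hhead, htail, hle m le_rfl,
    hgt (m + 1) (by omega)]
  abel

variable {Ξ : ℝ → ℝ → E} {C θ r s t : ℝ}

namespace SewingBound

theorem apply_self (hΞ : SewingBound Ξ C θ) (hθ : θ ≠ 0) {x : ℝ} (hx₀ : 0 ≤ x) (hx₁ : x ≤ 1) :
    Ξ x x = 0 := by
  simpa [Real.zero_rpow hθ] using hΞ x x x hx₀ le_rfl le_rfl hx₁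

theorem norm_riemannSum_sub_le_sum (hΞ : SewingBound Ξ C θ) (hθ : 0 ≤ θ) (hC : 0 ≤ C)
    (hs : 0 ≤ s) (ht : t ≤ 1) (n : ℕ) {u : ℕ → ℝ} (hu : IsPartition u (n + 1) s t) :
    ‖riemannSum Ξ u (n + 1) - Ξ s t‖ ≤
      C * (2 * (t - s)) ^ θ * ∑ k ∈ range n, (((k : ℝ) + 1) ^ θ)⁻¹ := by
  induction n generalizing u with
  | zero => simp [riemannSum, hu.zero, hu.last]
  | succ n ih =>
    obtain ⟨m, hmn, hgap⟩ := hu.exists_sub_le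
    obtain ⟨r, rfl⟩ := Nat.exists_eq_add_of_le hmn
    have hu' : IsPartition u (m + 2 + r) s t := by convert hu using 1; omega
    have hts : 0 ≤ t - s := sub_nonneg.mpr hu.le
    have hdefect : ‖Ξ (u m) (u (m + 1)) + Ξ (u (m + 1)) (u (m + 2)) - Ξ (u m) (u (m + 2))‖ ≤
        C * (2 * (t - s)) ^ θ * ((((m + r : ℕ) : ℝ) + 1) ^ θ)⁻¹ :=
      calc _ = ‖Ξ (u m) (u (m + 2)) - Ξ (u m) (u (m + 1)) - Ξ (u (m + 1)) (u (m + 2))‖ := by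
            rw [← norm_neg]; congr 1; abel
        _ ≤ C * (u (m + 2) - u m) ^ θ :=
            hΞ _ _ _ (hs.trans (hu'.mem_Icc (by omega)).1) (hu'.mono m (by omega))
              (hu'.mono (m + 1) (by omega)) ((hu'.mem_Icc (by omega)).2.trans ht)
        _ ≤ C * (2 * (t - s) / (((m + r : ℕ) : ℝ) + 1)) ^ θ := by
            gcongr
            exact sub_nonneg.mpr (hu'.apply_le_apply (by omega) (by omega))
        _ = C * (2 * (t - s)) ^ θ * ((((m + r : ℕ) : ℝ) + 1) ^ θ)⁻¹ := by
            rw [Real.div_rpow (by positivity) (by positivity)]; ring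
    have hv := hu'.eraseIdx
    rw [show m + 1 + r = m + r + 1 by omega] at hv
    rw [show m + r + 1 + 1 = m + 2 + r by omega, riemannSum_eraseIdx,
      show m + 1 + r = m + r + 1 by omega, sum_range_succ]
    calc _ ≤ ‖riemannSum Ξ _ (m + r + 1) - Ξ s t‖ + ‖Ξ (u m) (u (m + 1)) +
          Ξ (u (m + 1)) (u (m + 2)) - Ξ (u m) (u (m + 2))‖ := by
          rw [add_sub_right_comm]; exact norm_add_le _ _
      _ ≤ _ := by rw [mul_add]; exact add_le_add (ih hv) hdefect

theorem norm_riemannSum_sub_le (hΞ : SewingBound Ξ C θ) (hθ : 1 < θ) (hC : 0 ≤ C)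
    (hs : 0 ≤ s) (ht : t ≤ 1) {u : ℕ → ℝ} {n : ℕ} (hu : IsPartition u n s t) :
    ‖riemannSum Ξ u n - Ξ s t‖ ≤ sewingConst θ * C * (t - s) ^ θ := by
  have hts : 0 ≤ t - s := sub_nonneg.mpr hu.le
  cases n with
  | zero =>
    obtain rfl : s = t := hu.zero.symm.trans hu.last
    simp [riemannSum, hΞ.apply_self (by linarith) hs ht, Real.zero_rpow (by linarith : θ ≠ 0)]
  | succ n =>
    calc _ ≤ C * (2 * (t - s)) ^ θ * ∑ k ∈ range n, (((k : ℝ) + 1) ^ θ)⁻¹ :=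
          hΞ.norm_riemannSum_sub_le_sum (by linarith) hC hs ht n hu
      _ ≤ C * (2 * (t - s)) ^ θ * ∑' k : ℕ, (((k : ℝ) + 1) ^ θ)⁻¹ := by
          gcongr
          exact (summable_inv_add_one_rpow hθ).sum_le_tsum _ fun _ _ => by positivity
      _ = _ := by
          rw [sewingConst, Real.mul_rpow zero_le_two (by linarith)]; ring

end SewingBound

noncomputable def dyadicSum (Ξ : ℝ → ℝ → E) (n : ℕ) (s t : ℝ) : E :=
  riemannSum Ξ (dyadicPartition n s t) (2 ^ n)

noncomputable def sewingPath (Ξ : ℝ → ℝ → E) (t : ℝ) : E :=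
  limUnder atTop fun n => dyadicSum Ξ n 0 t

namespace SewingBound

theorem norm_dyadicSum_succ_sub_le (hΞ : SewingBound Ξ C θ) (hθ : 1 ≤ θ) (hC : 0 ≤ C)
    (hs : 0 ≤ s) (hst : s ≤ t) (ht : t ≤ 1) (n : ℕ) :
    ‖dyadicSum Ξ (n + 1) s t - dyadicSum Ξ n s t‖ ≤ C * ((2 : ℝ) ^ n)⁻¹ ^ (θ - 1) * (t - s) := by
  set p := dyadicPartition n s t
  set q := dyadicPartition (n + 1) s t
  have hp := isPartition_dyadicPartition n hs hst ht
  have hq := isPartition_dyadicPartition (n + 1) hs hst ht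
  have hsplit : dyadicSum Ξ (n + 1) s t - dyadicSum Ξ n s t =
      ∑ k ∈ range (2 ^ n), (Ξ (p k) (q (2 * k + 1)) + Ξ (q (2 * k + 1)) (p (k + 1)) -
        Ξ (p k) (p (k + 1))) := by
    simp only [dyadicSum, riemannSum, pow_succ', sum_range_two_mul, ← sum_sub_distrib]
    refine sum_congr rfl fun k _ => ?_
    rw [show 2 * k + 1 + 1 = 2 * (k + 1) by ring, dyadicPartition_two_mul, dyadicPartition_two_mul]
  rw [hsplit]
  refine hp.norm_sum_le_of_le_rpow hθ hC (fun k _ => dyadicPartition_succ_sub_le n s t k)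
    fun k hk => ?_
  have hk' : 2 * k + 1 < 2 ^ (n + 1) := by rw [pow_succ]; omega
  have hpq : p k ≤ q (2 * k + 1) := by
    have := hq.mono (2 * k) (by omega)
    rwa [dyadicPartition_two_mul] at this
  have hqp : q (2 * k + 1) ≤ p (k + 1) := by
    have := hq.mono (2 * k + 1) hk'
    rwa [show 2 * k + 1 + 1 = 2 * (k + 1) by ring, dyadicPartition_two_mul] at this
  rw [← norm_neg, show -(Ξ (p k) (q (2 * k + 1)) + Ξ (q (2 * k + 1)) (p (k + 1)) -
      Ξ (p k) (p (k + 1))) = Ξ (p k) (p (k + 1)) - Ξ (p k) (q (2 * k + 1)) -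
      Ξ (q (2 * k + 1)) (p (k + 1)) by abel]
  exact hΞ _ _ _ (hs.trans (hp.mem_Icc hk.le).1) hpq hqp ((hp.mem_Icc hk).2.trans ht)

-- The three terms are the contributions of a grid interval `[a, b]` to the dyadic sums over
-- `[r, t]`, `[r, s]` and `[s, t]`; they cancel unless `a < s < b`.
theorem norm_clamp_sub_sub_le (hΞ : SewingBound Ξ C θ) (hθ : θ ≠ 0) (hC : 0 ≤ C) (hr : 0 ≤ r)
    (hrs : r ≤ s) (hst : s ≤ t) (ht : t ≤ 1) {a b : ℝ} (hab : a ≤ b) :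
    ‖Ξ (max r (min a t)) (max r (min b t)) - Ξ (max r (min a s)) (max r (min b s)) -
      Ξ (max s (min a t)) (max s (min b t))‖ ≤ C * (max r (min b t) - max r (min a t)) ^ θ := by
  have hRHS : 0 ≤ C * (max r (min b t) - max r (min a t)) ^ θ :=
    mul_nonneg hC (Real.rpow_nonneg (sub_nonneg.mpr (by gcongr)) _)
  have hΞs : Ξ s s = 0 := hΞ.apply_self hθ (hr.trans hrs) (hst.trans ht)
  rcases le_or_gt b s with hbs | hsb
  · refine (norm_eq_zero.mpr ?_).trans_le hRHS
    rw [min_eq_left (show a ≤ t by linarith), min_eq_left (show b ≤ t by linarith),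
      min_eq_left (show a ≤ s by linarith), min_eq_left hbs, max_eq_left (show a ≤ s by linarith),
      max_eq_left hbs, hΞs]
    abel
  rcases le_or_gt s a with hsa | has
  · refine (norm_eq_zero.mpr ?_).trans_le hRHS
    rw [min_eq_right hsa, min_eq_right (hsa.trans hab), max_eq_right hrs,
      max_eq_right (le_min hsa hst), max_eq_right (le_min (hsa.trans hab) hst),
      max_eq_right (le_min (hrs.trans hsa) (hrs.trans hst)),
      max_eq_right (le_min (hrs.trans (hsa.trans hab)) (hrs.trans hst)), hΞs]
    abel
  · rw [min_eq_left (show a ≤ t by linarith), min_eq_left has.le, min_eq_right hsb.le,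
      max_eq_left has.le, max_eq_right hrs, max_eq_right (le_min hsb.le hst),
      max_eq_right (le_min (hrs.trans hsb.le) (hrs.trans hst))]
    exact hΞ _ _ _ (le_max_of_le_left hr) (max_le hrs has.le) (le_min hsb.le hst)
      ((min_le_right _ _).trans ht)

theorem norm_dyadicSum_sub_sub_le (hΞ : SewingBound Ξ C θ) (hθ : 1 ≤ θ) (hC : 0 ≤ C)
    (hr : 0 ≤ r) (hrs : r ≤ s) (hst : s ≤ t) (ht : t ≤ 1) (n : ℕ) :
    ‖dyadicSum Ξ n r t - dyadicSum Ξ n r s - dyadicSum Ξ n s t‖ ≤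
      C * ((2 : ℝ) ^ n)⁻¹ ^ (θ - 1) * (t - r) := by
  simp only [dyadicSum, riemannSum, ← sum_sub_distrib]
  refine (isPartition_dyadicPartition n hr (hrs.trans hst) ht).norm_sum_le_of_le_rpow hθ hC
    (fun k _ => dyadicPartition_succ_sub_le n r t k) fun k _ => ?_
  exact hΞ.norm_clamp_sub_sub_le (by linarith) hC hr hrs hst ht (by gcongr; simp)

theorem tendsto_dyadicSum_sewingPath [CompleteSpace E] (hΞ : SewingBound Ξ C θ) (hθ : 1 < θ)
    (hC : 0 ≤ C) (ht₀ : 0 ≤ t) (ht : t ≤ 1) :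
    Tendsto (fun n => dyadicSum Ξ n 0 t) atTop (𝓝 (sewingPath Ξ t)) :=
  CauchySeq.tendsto_limUnder <|
    cauchySeq_of_le_geometric _ (C * t) (inv_two_rpow_lt_one (sub_pos.mpr hθ)) fun n => by
      rw [dist_comm, dist_eq_norm, mul_assoc, mul_comm t, ← mul_assoc, ← inv_two_pow_rpow]
      simpa using hΞ.norm_dyadicSum_succ_sub_le hθ.le hC le_rfl ht₀ ht n

theorem norm_sewingPath_sub_sub_le [CompleteSpace E] (hΞ : SewingBound Ξ C θ) (hθ : 1 < θ)
    (hC : 0 ≤ C) (hs : 0 ≤ s) (hst : s ≤ t) (ht : t ≤ 1) :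
    ‖sewingPath Ξ t - sewingPath Ξ s - Ξ s t‖ ≤ sewingConst θ * C * (t - s) ^ θ := by
  have hlim : Tendsto (fun n => ‖dyadicSum Ξ n 0 t - dyadicSum Ξ n 0 s - Ξ s t‖) atTop
      (𝓝 ‖sewingPath Ξ t - sewingPath Ξ s - Ξ s t‖) :=
    (((hΞ.tendsto_dyadicSum_sewingPath hθ hC (hs.trans hst) ht).sub
      (hΞ.tendsto_dyadicSum_sewingPath hθ hC hs (hst.trans ht))).sub_const _).norm
  have hbound : Tendsto (fun n : ℕ => C * ((2 : ℝ) ^ n)⁻¹ ^ (θ - 1) * t +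
      sewingConst θ * C * (t - s) ^ θ) atTop (𝓝 (sewingConst θ * C * (t - s) ^ θ)) := by
    simpa using (((tendsto_inv_two_pow_rpow (sub_pos.mpr hθ)).const_mul C).mul_const t).add_const
      (sewingConst θ * C * (t - s) ^ θ)
  refine le_of_tendsto_of_tendsto' hlim hbound fun n => ?_
  rw [show dyadicSum Ξ n 0 t - dyadicSum Ξ n 0 s - Ξ s t = (dyadicSum Ξ n 0 t -
    dyadicSum Ξ n 0 s - dyadicSum Ξ n s t) + (dyadicSum Ξ n s t - Ξ s t) by abel]
  refine norm_add_le_of_le ?_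
    (hΞ.norm_riemannSum_sub_le hθ hC hs ht (isPartition_dyadicPartition n hs hst ht))
  simpa using hΞ.norm_dyadicSum_sub_sub_le hθ.le hC le_rfl hs hst ht n

end SewingBound

theorem eq_of_norm_sub_le_rpow {h : ℝ → E} {M : ℝ} (hθ : 1 < θ) (hM : 0 ≤ M)
    (hh : ∀ s t, 0 ≤ s → s ≤ t → t ≤ 1 → ‖h t - h s‖ ≤ M * (t - s) ^ θ) (ht₀ : 0 ≤ t)
    (ht : t ≤ 1) : h t = h 0 := by
  have hp (n : ℕ) := isPartition_dyadicPartition n le_rfl ht₀ ht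
  have hbound (n : ℕ) : ‖h t - h 0‖ ≤ M * ((2 : ℝ) ^ n)⁻¹ ^ (θ - 1) * t := by
    have := (hp n).norm_sum_le_of_le_rpow hθ.le hM (fun k _ => dyadicPartition_succ_sub_le n 0 t k)
      (g := fun k => h (dyadicPartition n 0 t (k + 1)) - h (dyadicPartition n 0 t k))
      fun k hk =>
        hh _ _ ((hp n).mem_Icc hk.le).1 ((hp n).mono k hk) (((hp n).mem_Icc hk).2.trans ht)
    rwa [(hp n).sum_map_sub h, sub_zero] at this
  have hlim : Tendsto (fun n : ℕ => M * ((2 : ℝ) ^ n)⁻¹ ^ (θ - 1) * t) atTop (𝓝 0) := by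
    simpa using ((tendsto_inv_two_pow_rpow (sub_pos.mpr hθ)).const_mul M).mul_const t
  exact sub_eq_zero.mp (norm_le_zero_iff.mp (ge_of_tendsto' hlim hbound))

theorem exists_eq_add_const_of_norm_sub_sub_le {I I' : ℝ → E} {M : ℝ} (hθ : 1 < θ) (hM : 0 ≤ M)
    (hI : ∀ s t, 0 ≤ s → s ≤ t → t ≤ 1 → ‖I t - I s - Ξ s t‖ ≤ M * (t - s) ^ θ)
    (hI' : ∀ s t, 0 ≤ s → s ≤ t → t ≤ 1 → ‖I' t - I' s - Ξ s t‖ ≤ M * (t - s) ^ θ) :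
    ∃ c, ∀ t, 0 ≤ t → t ≤ 1 → I' t = I t + c := by
  refine ⟨I' 0 - I 0, fun t ht₀ ht => ?_⟩
  have hconst := eq_of_norm_sub_le_rpow (h := I' - I) hθ (by positivity : 0 ≤ 2 * M)
    (fun s t hs hst ht => by
      calc ‖(I' - I) t - (I' - I) s‖ = ‖(I' t - I' s - Ξ s t) - (I t - I s - Ξ s t)‖ := by
            simp only [Pi.sub_apply]; congr 1; abel
        _ ≤ 2 * M * (t - s) ^ θ := by
            linarith [norm_sub_le (I' t - I' s - Ξ s t) (I t - I s - Ξ s t),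
              hI s t hs hst ht, hI' s t hs hst ht])
    ht₀ ht
  simp only [Pi.sub_apply] at hconst
  rw [← hconst]
  abel

theorem exists_pos_norm_riemannSum_sub_lt {I : ℝ → E} {M ε : ℝ} (hθ : 1 < θ) (hM : 0 ≤ M)
    (hI : ∀ s t, 0 ≤ s → s ≤ t → t ≤ 1 → ‖I t - I s - Ξ s t‖ ≤ M * (t - s) ^ θ)
    (hs : 0 ≤ s) (ht : t ≤ 1) (hε : 0 < ε) :
    ∃ δ > 0, ∀ (n : ℕ) (u : ℕ → ℝ), IsPartition u n s t → (∀ i < n, u (i + 1) - u i < δ) →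
      ‖riemannSum Ξ u n - (I t - I s)‖ < ε := by
  have hlim : Tendsto (fun δ => M * δ ^ (θ - 1) * (t - s)) (𝓝[>] 0) (𝓝 0) := by
    have := ((Real.continuousAt_rpow_const 0 (θ - 1) (Or.inr (by linarith))).tendsto.const_mul
      M).mul_const (t - s)
    simpa [Real.zero_rpow (by linarith : θ - 1 ≠ 0)] using this.mono_left nhdsWithin_le_nhds
  obtain ⟨δ, hδε, hδ⟩ := ((hlim.eventually (gt_mem_nhds hε)).and self_mem_nhdsWithin).exists
  refine ⟨δ, hδ, fun n u hu hmesh => ?_⟩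
  have key := hu.norm_sum_le_of_le_rpow hθ.le hM (fun i hi => (hmesh i hi).le)
    (g := fun i => Ξ (u i) (u (i + 1)) - (I (u (i + 1)) - I (u i))) fun i hi => by
      rw [norm_sub_rev]
      exact hI _ _ (hs.trans (hu.mem_Icc hi.le).1) (hu.mono i hi) ((hu.mem_Icc hi).2.trans ht)
  rw [sum_sub_distrib, hu.sum_map_sub I] at key
  exact key.trans_lt hδε

end Sewing

theorem statement18_general (E : Type*) [NormedAddCommGroup E]
    [CompleteSpace E] (θ : ℝ) (hθ : 1 < θ) :
    ∃ K : ℝ, 0 < K ∧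
      ∀ (Ξ : ℝ → ℝ → E) (C : ℝ), 0 ≤ C →
        (∀ s t u : ℝ, 0 ≤ s → s ≤ t → t ≤ u → u ≤ 1 →
          ‖Ξ s u - Ξ s t - Ξ t u‖ ≤ C * (u - s) ^ θ) →
        ∃ I : ℝ → E,
          (∀ s t : ℝ, 0 ≤ s → s ≤ t → t ≤ 1 →
            ‖I t - I s - Ξ s t‖ ≤ K * C * (t - s) ^ θ) ∧
          (∀ I' : ℝ → E,
            (∀ s t : ℝ, 0 ≤ s → s ≤ t → t ≤ 1 →
              ‖I' t - I' s - Ξ s t‖ ≤ K * C * (t - s) ^ θ) →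
            ∃ c : E, ∀ t : ℝ, 0 ≤ t → t ≤ 1 → I' t = I t + c) ∧
          (∀ s t : ℝ, 0 ≤ s → s ≤ t → t ≤ 1 → ∀ ε > (0:ℝ), ∃ δ > (0:ℝ),
            ∀ (n : ℕ) (u : ℕ → ℝ), u 0 = s → u n = t →
              (∀ i < n, u i ≤ u (i + 1)) → (∀ i < n, u (i + 1) - u i < δ) →
              ‖(∑ i ∈ Finset.range n, Ξ (u i) (u (i + 1))) - (I t - I s)‖ < ε) := by
  refine ⟨sewingConst θ, sewingConst_pos hθ, fun Ξ C hC hΞ => ?_⟩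
  have hK : 0 ≤ sewingConst θ * C := mul_nonneg (sewingConst_pos hθ).le hC
  have hI := fun s t (hs : 0 ≤ s) (hst : s ≤ t) (ht : t ≤ 1) =>
    SewingBound.norm_sewingPath_sub_sub_le hΞ hθ hC hs hst ht
  refine ⟨sewingPath Ξ, hI, fun I' hI' => exists_eq_add_const_of_norm_sub_sub_le hθ hK hI hI',
    fun s t hs _ ht ε hε => ?_⟩
  obtain ⟨δ, hδ, hsum⟩ := exists_pos_norm_riemannSum_sub_lt hθ hK hI hs ht hε
  exact ⟨δ, hδ, fun n u hu₀ hun hmono => hsum n u ⟨hu₀, hun, hmono⟩⟩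

/-- Sewing lemma with explicit modulus: if `δΞ_{s,t,u} = Ξ_{s,u} − Ξ_{s,t} − Ξ_{t,u}`
satisfies `‖δΞ_{s,t,u}‖ ≤ C·|u−s|^θ` with `θ > 1`, then there is a path `I`,
unique up to an additive constant, with `‖I_t − I_s − Ξ_{s,t}‖ ≤ K·C·|t−s|^θ`
(`K` depending only on `θ`), and `I_t − I_s` is the limit of Riemann sums
`Σ_{[u,v]∈D} Ξ_{u,v}` along partitions with mesh tending to `0`. -/
theorem statement18 (E : Type*) [NormedAddCommGroup E] [NormedSpace ℝ E]
    [CompleteSpace E] (θ : ℝ) (hθ : 1 < θ) :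
    ∃ K : ℝ, 0 < K ∧
      ∀ (Ξ : ℝ → ℝ → E) (C : ℝ), 0 ≤ C →
        (∀ s t u : ℝ, 0 ≤ s → s ≤ t → t ≤ u → u ≤ 1 →
          ‖Ξ s u - Ξ s t - Ξ t u‖ ≤ C * (u - s) ^ θ) →
        ∃ I : ℝ → E,
          (∀ s t : ℝ, 0 ≤ s → s ≤ t → t ≤ 1 →
            ‖I t - I s - Ξ s t‖ ≤ K * C * (t - s) ^ θ) ∧
          (∀ I' : ℝ → E,
            (∀ s t : ℝ, 0 ≤ s → s ≤ t → t ≤ 1 →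
              ‖I' t - I' s - Ξ s t‖ ≤ K * C * (t - s) ^ θ) →
            ∃ c : E, ∀ t : ℝ, 0 ≤ t → t ≤ 1 → I' t = I t + c) ∧
          (∀ s t : ℝ, 0 ≤ s → s ≤ t → t ≤ 1 → ∀ ε > (0:ℝ), ∃ δ > (0:ℝ),
            ∀ (n : ℕ) (u : ℕ → ℝ), u 0 = s → u n = t →
              (∀ i < n, u i ≤ u (i + 1)) → (∀ i < n, u (i + 1) - u i < δ) →
              ‖(∑ i ∈ Finset.range n, Ξ (u i) (u (i + 1))) - (I t - I s)‖ < ε) :=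
  statement18_general E θ hθ
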